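/- arXiv:1610.00470 — 2 statements merged into one kernel-verified Lean document; each statement's English description precedes it below -/
import Mathlib

section
/- The first-order stable spline kernel matrix K_β with entries (K_β)_{ij} = β^{max(i,j)} for i,j ∈ {1,…,m} is positive semidefinite for all 0 ≤ β < 1, and positive definite for 0 < β < 1. -/
open Matrix Finset

section Aux

variable (m : ℕ) (β : ℝ)

/-- The weights in the decomposition. -/
noncomputable def ssWeight (k : ℕ) : ℝ :=
  if k = m - 1 then β ^ m else β ^ (k + 1) * (1 - β)

lemma ssWeight_nonneg (hβ0 : 0 ≤ β) (hβ1 : β < 1) (k : ℕ) : 0 ≤ ssWeight m β k := by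
  unfold ssWeight
  split
  · positivity
  · have : 0 ≤ 1 - β := by linarith
    positivity

lemma ssWeight_pos (hβ0 : 0 < β) (hβ1 : β < 1) (k : ℕ) : 0 < ssWeight m β k := by
  unfold ssWeight
  split
  · positivity
  · have : 0 < 1 - β := by linarith
    positivity

lemma ssWeight_sum : ∀ n M : ℕ, M + n + 1 = m →
    ∑ k ∈ Finset.Ico M m, ssWeight m β k = β ^ (M + 1) := by
  intro n
  induction n with
  | zero =>
      intro M hM
      have h1 : M = m - 1 := by omega
      have h2 : m = M + 1 := by omega
      rw [h2, Finset.sum_Ico_succ_top (by omega), Finset.Ico_self, Finset.sum_empty, zero_add]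
      simp [ssWeight, h1, ← h2]
  | succ n ih =>
      intro M hM
      have hlt : M < m := by omega
      rw [Finset.sum_eq_sum_Ico_succ_bot hlt, ih (M + 1) (by omega)]
      have hne : M ≠ m - 1 := by omega
      rw [ssWeight, if_neg hne]
      ring

/-- The Cholesky-type factor. -/
noncomputable def ssFactor : Matrix (Fin m) (Fin m) ℝ :=
  Matrix.of fun k i => Real.sqrt (ssWeight m β k.val) * (if i ≤ k then 1 else 0)

lemma ssFactor_decomp (hβ0 : 0 ≤ β) (hβ1 : β < 1) :
    (ssFactor m β)ᴴ * (ssFactor m β) =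
      (Matrix.of fun i j : Fin m => β ^ (max (i.val + 1) (j.val + 1))) := by
  ext i j
  simp only [Matrix.mul_apply, conjTranspose_apply, ssFactor, Matrix.of_apply, star_trivial]
  have hM : max i.val j.val < m := by
    rcases max_cases i.val j.val with ⟨h, _⟩ | ⟨h, _⟩ <;> rw [h] <;> omega
  have key : ∀ k : Fin m,
      (Real.sqrt (ssWeight m β k.val) * (if i ≤ k then 1 else 0)) *
        (Real.sqrt (ssWeight m β k.val) * (if j ≤ k then 1 else 0)) =
      (if max i.val j.val ≤ k.val then ssWeight m β k.val else 0) := by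
    intro k
    have hs : Real.sqrt (ssWeight m β k.val) * Real.sqrt (ssWeight m β k.val)
        = ssWeight m β k.val := Real.mul_self_sqrt (ssWeight_nonneg m β hβ0 hβ1 _)
    by_cases hmax : max i.val j.val ≤ k.val
    · have hik : i ≤ k := Fin.le_def.mpr (by omega)
      have hjk : j ≤ k := Fin.le_def.mpr (by omega)
      rw [if_pos hik, if_pos hjk, if_pos hmax, mul_one, hs]
    · rw [if_neg hmax]
      rcases not_and_or.mp (fun hc : i.val ≤ k.val ∧ j.val ≤ k.val =>
          hmax (by omega)) with hc | hc
      · rw [if_neg (fun hik => hc (Fin.le_def.mp hik))]; ring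
      · rw [if_neg (fun hjk => hc (Fin.le_def.mp hjk))]; ring
  rw [Finset.sum_congr rfl (fun k _ => key k)]
  rw [Fin.sum_univ_eq_sum_range (fun k => if max i.val j.val ≤ k then ssWeight m β k else 0)]
  rw [← Finset.sum_filter]
  have hset : (Finset.range m).filter (fun k => max i.val j.val ≤ k)
      = Finset.Ico (max i.val j.val) m := by
    ext k; simp [Finset.mem_filter, Finset.mem_Ico, and_comm]
  rw [hset, ssWeight_sum m β (m - (max i.val j.val) - 1) (max i.val j.val) (by omega)]
  rcases max_cases i.val j.val with ⟨h, h'⟩ | ⟨h, h'⟩ <;> rw [h]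
  · rw [max_eq_left (by omega)]
  · rw [max_eq_right (by omega)]

lemma ssFactor_mulVec_inj (hβ0 : 0 < β) (hβ1 : β < 1) (x : Fin m → ℝ)
    (hx : (ssFactor m β) *ᵥ x = 0) : x = 0 := by
  have hS : ∀ k : Fin m, ∑ i ∈ Finset.Iic k, x i = 0 := by
    intro k
    have h0 := congrFun hx k
    simp only [ssFactor, Matrix.mulVec, Matrix.of_apply, Pi.zero_apply,
      dotProduct] at h0
    have hsum : ∑ i : Fin m, Real.sqrt (ssWeight m β k.val) * (if i ≤ k then 1 else 0) * x i
        = Real.sqrt (ssWeight m β k.val) * ∑ i ∈ Finset.Iic k, x i := by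
      rw [Finset.mul_sum]
      rw [← Finset.sum_filter_add_sum_filter_not Finset.univ (fun i => i ≤ k)]
      have h2 : ∑ i ∈ Finset.univ.filter (fun i => ¬ i ≤ k),
          Real.sqrt (ssWeight m β k.val) * (if i ≤ k then 1 else 0) * x i = 0 := by
        apply Finset.sum_eq_zero
        intro i hi
        simp only [Finset.mem_filter] at hi
        rw [if_neg hi.2]; ring
      rw [h2, add_zero]
      apply Finset.sum_congr
      · ext i; simp [Finset.mem_filter]
      · intro i hi
        simp only [Finset.mem_Iic] at hi
        rw [if_pos hi, mul_one]
    rw [hsum] at h0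
    have hsq : Real.sqrt (ssWeight m β k.val) ≠ 0 :=
      ne_of_gt (Real.sqrt_pos.mpr (ssWeight_pos m β hβ0 hβ1 _))
    exact (mul_eq_zero.mp h0).resolve_left hsq
  have hz : ∀ n : ℕ, ∀ j : Fin m, j.val = n → x j = 0 := by
    intro n
    induction n using Nat.strong_induction_on with
    | _ n ih =>
      intro j hj
      have h0 := hS j
      rw [← Finset.Iio_insert, Finset.sum_insert (by simp)] at h0
      have hIio : ∑ i ∈ Finset.Iio j, x i = 0 := by
        apply Finset.sum_eq_zero
        intro i hi
        simp only [Finset.mem_Iio, Fin.lt_def] at hi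
        exact ih i.val (by omega) i rfl
      rw [hIio, add_zero] at h0
      exact h0
  funext j
  exact hz j.val j rfl

end Aux

/-- The first-order stable spline kernel matrix `K_β` with entries
`(K_β)_{ij} = β^{max(i,j)}` (1-based indices) is positive semidefinite for all `0 ≤ β < 1`,
and positive definite for `0 < β < 1`. -/
theorem stable_spline_kernel_posdef (m : ℕ) (β : ℝ) (hβ0 : 0 ≤ β) (hβ1 : β < 1) :
    (Matrix.of fun i j : Fin m => β ^ (max (i.val + 1) (j.val + 1))).PosSemidef ∧
    (0 < β → (Matrix.of fun i j : Fin m => β ^ (max (i.val + 1) (j.val + 1))).PosDef) := by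
  have hdecomp := ssFactor_decomp m β hβ0 hβ1
  have hpsd := hdecomp ▸ Matrix.posSemidef_conjTranspose_mul_self (ssFactor m β)
  refine ⟨hpsd, fun hβ0' => Matrix.PosDef.of_dotProduct_mulVec_pos hpsd.1 (fun x hx => ?_)⟩
  refine lt_of_le_of_ne (hpsd.dotProduct_mulVec_nonneg x) fun h => hx ?_
  rw [← hdecomp, ← Matrix.mulVec_mulVec, Matrix.dotProduct_mulVec,
    Matrix.vecMul_conjTranspose, star_star] at h
  exact ssFactor_mulVec_inj m β hβ0' hβ1 x
    (dotProduct_star_self_eq_zero.mp h.symm)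
end

section
/- The determinant of the first-order stable spline kernel K_β (with (K_β)_{ij} = β^{max(i,j)}, 1 ≤ i,j ≤ m, 0 < β < 1) equals β^{m(m+1)/2} · (1-β)^{m-1}. -/
open Matrix

/-- The determinant of the first-order stable spline kernel, with entries
`(K_β)_{ij} = β^{max(i,j)}` for `1 ≤ i,j ≤ m` and `0 < β < 1`, equals
`β^{m(m+1)/2} · (1-β)^{m-1}`. -/
theorem stable_spline_kernel_det (m : ℕ) (hm : 1 ≤ m) (β : ℝ) (hβ0 : 0 < β) (hβ1 : β < 1) :
    (Matrix.of fun i j : Fin m => β ^ (max (i.val + 1) (j.val + 1))).det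
      = β ^ (m * (m + 1) / 2) * (1 - β) ^ (m - 1) := by
  obtain ⟨n, rfl⟩ : ∃ n, m = n + 1 := ⟨m - 1, by omega⟩
  set c : Fin (n+1) → ℝ := fun k => β ^ (k.val + 1) * (if k.val = n then 1 else (1 - β)) with hc
  set F : Matrix (Fin (n+1)) (Fin (n+1)) ℝ :=
    Matrix.of (fun i k : Fin (n+1) => if i ≤ k then (1:ℝ) else 0) with hF
  have key : (Matrix.of fun i j : Fin (n+1) => β ^ (max (i.val + 1) (j.val + 1)))
      = F * Matrix.diagonal c * Fᵀ := by
    ext i j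
    rw [Matrix.mul_apply]
    have hsummand : ∀ k : Fin (n+1), (F * Matrix.diagonal c) i k * Fᵀ k j
        = if max i.val j.val ≤ k.val then
            β ^ (k.val + 1) * (if k.val = n then 1 else (1 - β)) else 0 := by
      intro k
      rw [Matrix.mul_diagonal, Matrix.transpose_apply]
      simp only [hF, hc, Matrix.of_apply, Fin.le_def]
      rcases le_or_gt i.val k.val with h1 | h1 <;> rcases le_or_gt j.val k.val with h2 | h2 <;>
        simp [h1, h2, Nat.not_le.mpr, max_le_iff] <;> omega
    rw [Finset.sum_congr rfl (fun k _ => hsummand k)]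
    set M := max i.val j.val with hM
    have hMn : M ≤ n := by
      have := i.isLt; have := j.isLt; omega
    have hsum : ∑ k : Fin (n+1), (if M ≤ k.val then
        β ^ (k.val + 1) * (if k.val = n then 1 else (1 - β)) else 0) = β ^ (M + 1) := by
      rw [Fin.sum_univ_eq_sum_range
        (fun k => if M ≤ k then β ^ (k + 1) * (if k = n then 1 else (1 - β)) else 0)]
      rw [Finset.sum_range_succ]
      have h1 : ∀ k ∈ Finset.range n,
          (if M ≤ k then β ^ (k + 1) * (if k = n then 1 else (1 - β)) else 0)
          = (if M ≤ k then β ^ (k + 1) - β ^ (k + 2) else 0) := by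
        intro k hk
        rw [Finset.mem_range] at hk
        rcases le_or_gt M k with h | h
        · simp [h, Nat.ne_of_lt hk]; ring
        · simp [Nat.not_le.mpr h]
      rw [Finset.sum_congr rfl h1]
      rw [← Finset.sum_filter]
      have hfil : Finset.filter (fun a => M ≤ a) (Finset.range n) = Finset.Ico M n := by
        ext a; simp [Finset.mem_Ico, Finset.mem_filter, Finset.mem_range]; omega
      rw [hfil]
      have htel : ∑ a ∈ Finset.Ico M n, (β ^ (a + 1) - β ^ (a + 2)) = β ^ (M + 1) - β ^ (n + 1) := by
        rw [Finset.sum_Ico_eq_sub _ hMn]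
        rw [Finset.sum_range_sub' (fun a => β ^ (a + 1)) n,
            Finset.sum_range_sub' (fun a => β ^ (a + 1)) M]
        ring
      rw [htel]
      simp [hMn]
    rw [hsum]
    simp only [Matrix.of_apply]
    congr 1
    omega
  rw [key, Matrix.det_mul, Matrix.det_mul, Matrix.det_transpose]
  have hdF : F.det = 1 := by
    rw [Matrix.det_of_upperTriangular]
    · exact Finset.prod_eq_one fun i _ => by simp [hF]
    · intro i j hij
      simp only [hF, Matrix.of_apply, ite_eq_right_iff]
      intro h; exact absurd h (not_le.mpr hij)
  rw [hdF, Matrix.det_diagonal]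
  have hprod : ∏ k : Fin (n+1), c k = β ^ ((n+1) * (n+2) / 2) * (1 - β) ^ n := by
    simp only [hc]
    rw [Finset.prod_mul_distrib]
    congr 1
    · rw [Finset.prod_pow_eq_pow_sum]
      congr 1
      rw [Fin.sum_univ_eq_sum_range (fun k => k + 1)]
      have h3 : (n+1) * (n+2) / 2 = (n+2) * (n+2-1) / 2 := by
        rw [show n+2-1 = n+1 from rfl, Nat.mul_comm]
      rw [h3, ← Finset.sum_range_id (n+2), Finset.sum_range_succ' (fun i => i) (n+1)]
      simp
    · rw [Fin.prod_univ_eq_prod_range (fun k => if k = n then (1:ℝ) else 1 - β)]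
      rw [Finset.prod_range_succ]
      have : ∀ k ∈ Finset.range n, (if k = n then (1:ℝ) else 1 - β) = 1 - β := by
        intro k hk; rw [Finset.mem_range] at hk; simp [Nat.ne_of_lt hk]
      rw [Finset.prod_congr rfl this]
      simp
  rw [hprod]
  norm_num
end
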